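/- arXiv:1304.7456 — 2 statements merged into one kernel-verified Lean document; each statement's English description precedes it below -/
import Mathlib

section
/- Let $t \geq 1$, $S = \{2^0, 2^1, \ldots, 2^{t-1}\}$, and $\tau = 2^t - 1$. Then the number of tuples $(y_1, \ldots, y_t) \in S^t$ with $\tau \mid (y_1 + \cdots + y_t)$ is exactly $t!$ (i.e., every such tuple has sum exactly $\tau$ and is a permutation of the elements of $S$). -/
/-! Write the tuple as `(2 ^ e₁, …, 2 ^ eₜ)` with `eᵢ < t`. Modulo `2 ^ t - 1` we have
`2 ^ t ≡ 1`, so two equal powers `2 ^ e + 2 ^ e` may be merged into the single power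
`2 ^ ((e + 1) % t)` without changing the residue of the sum. Without repetitions the sum of
distinct powers `2 ^ e`, `e < t`, lies in `(0, 2 ^ t - 1]`, with equality only for the full
range `{0, …, t - 1}`. By induction on the size, a nonempty multiset of at most `t` exponents
whose powers sum to a multiple of `2 ^ t - 1` is therefore this full range: a repetition would
merge into a multiset with fewer than `t` elements that is again the full range. So the
exponents form a permutation, and the tuples correspond to the `t!` permutations of `Fin t`. -/

open Finset

lemma sum_range_two_pow (n : ℕ) : ∑ i ∈ range n, 2 ^ i = 2 ^ n - 1 := by
  simpa using Nat.geomSum_eq le_rfl n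

lemma two_pow_modEq_two_pow_mod (t n : ℕ) : 2 ^ n ≡ 2 ^ (n % t) [MOD 2 ^ t - 1] := by
  have h : 2 ^ t ≡ 1 [MOD 2 ^ t - 1] := Nat.modEq_sub Nat.one_le_two_pow
  calc 2 ^ n = (2 ^ t) ^ (n / t) * 2 ^ (n % t) := by rw [← pow_mul, ← pow_add, Nat.div_add_mod]
    _ ≡ 1 ^ (n / t) * 2 ^ (n % t) [MOD 2 ^ t - 1] := (h.pow _).mul_right _
    _ = 2 ^ (n % t) := by rw [one_pow, one_mul]

lemma Finset.eq_range_of_two_pow_sub_one_dvd_sum {s : Finset ℕ} {t : ℕ} (hs : s ⊆ range t)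
    (hne : s.Nonempty) (hdvd : 2 ^ t - 1 ∣ ∑ i ∈ s, 2 ^ i) : s = range t := by
  by_contra hst
  obtain ⟨x, hx, hxs⟩ := exists_of_ssubset (hs.ssubset_of_ne hst)
  have hlt : ∑ i ∈ s, 2 ^ i < 2 ^ t - 1 := sum_range_two_pow t ▸
    sum_lt_sum_of_subset hs hx hxs (by positivity) fun _ _ _ => Nat.zero_le _
  have hpos : 0 < ∑ i ∈ s, 2 ^ i := sum_pos (fun _ _ => by positivity) hne
  exact (Nat.le_of_dvd hpos hdvd).not_gt hlt

theorem Multiset.eq_range_of_two_pow_sub_one_dvd_sum {t : ℕ} (M : Multiset ℕ) (hM : M ≠ 0)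
    (hlt : ∀ e ∈ M, e < t) (hcard : card M ≤ t) (hdvd : 2 ^ t - 1 ∣ (M.map (2 ^ ·)).sum) :
    M = range t := by
  induction hn : card M using Nat.strong_induction_on generalizing M with
  | _ n ih =>
  by_cases hnd : M.Nodup
  · obtain ⟨a, ha⟩ := exists_mem_of_ne_zero hM
    exact congrArg Finset.val <| Finset.eq_range_of_two_pow_sub_one_dvd_sum (s := ⟨M, hnd⟩)
      (fun e he => Finset.mem_range.mpr (hlt e he)) ⟨a, ha⟩ hdvd
  obtain ⟨e, M', rfl⟩ : ∃ e M', M = e ::ₘ e ::ₘ M' := by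
    simpa [nodup_iff_ne_cons_cons] using hnd
  have het : e < t := hlt e (mem_cons_self _ _)
  have hmerge : ((((e + 1) % t) ::ₘ M').map (2 ^ ·)).sum ≡ ((e ::ₘ e ::ₘ M').map (2 ^ ·)).sum
      [MOD 2 ^ t - 1] := by
    simp only [map_cons, sum_cons, ← add_assoc, ← two_mul, ← pow_succ']
    exact ((two_pow_modEq_two_pow_mod t (e + 1)).symm).add_right _
  have hcard' : card M' + 1 < t := by simpa using hcard
  have hrange := ih _ (by simp [← hn]) (((e + 1) % t) ::ₘ M') cons_ne_zero
    (by simpa using ⟨Nat.mod_lt _ (by omega), fun a ha => hlt a (by simp [ha])⟩)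
    (by rw [card_cons]; omega) ((hmerge.dvd_iff dvd_rfl).mpr hdvd) rfl
  have := congrArg card hrange
  rw [card_cons, card_range] at this
  omega

section

variable {t : ℕ}

lemma sum_two_pow_perm (σ : Equiv.Perm (Fin t)) : ∑ i, 2 ^ (σ i : ℕ) = 2 ^ t - 1 := by
  rw [Equiv.sum_comp σ (fun j : Fin t => 2 ^ (j : ℕ)), Fin.sum_univ_eq_sum_range,
    sum_range_two_pow]

lemma two_pow_perm_injective :
    Function.Injective fun (σ : Equiv.Perm (Fin t)) (i : Fin t) => 2 ^ (σ i : ℕ) :=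
  fun _ _ h => Equiv.ext fun i => Fin.ext <| Nat.pow_right_injective le_rfl (congrFun h i)

lemma exists_perm_of_two_pow_sub_one_dvd_sum (ht : 1 ≤ t) {y : Fin t → ℕ}
    (hy : ∀ i, y i ∈ (range t).image (2 ^ ·)) (hdvd : 2 ^ t - 1 ∣ ∑ i, y i) :
    ∃ σ : Equiv.Perm (Fin t), y = fun i => 2 ^ (σ i : ℕ) := by
  choose e he using fun i => mem_image.mp (hy i)
  have hsum : ((univ.val.map e).map (2 ^ ·)).sum = ∑ i, y i := by
    rw [Multiset.map_map]
    exact sum_congr rfl fun i _ => (he i).2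
  have hrange := Multiset.eq_range_of_two_pow_sub_one_dvd_sum (univ.val.map e)
    (by simpa using Nat.one_le_iff_ne_zero.mp ht) (by simpa using fun i => mem_range.mp (he i).1) (by simp) (hsum ▸ hdvd)
  have he_inj : Function.Injective e :=
    Fintype.nodup_map_univ_iff_injective.mp (hrange ▸ Multiset.nodup_range t)
  let e' (i : Fin t) : Fin t := ⟨e i, mem_range.mp (he i).1⟩
  have he'_inj : Function.Injective e' := fun i j h => he_inj (congrArg Fin.val h)
  exact ⟨Equiv.ofBijective e' (Finite.injective_iff_bijective.mp he'_inj),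
    funext fun i => (he i).2.symm⟩

end

/-- With `S = {2^0, …, 2^{t-1}}` and `τ = 2^t - 1`, the number of tuples in `S^t`
whose sum is divisible by `τ` is exactly `t!`; moreover every such tuple sums to exactly `τ`
and is a permutation of the elements of `S`. -/
theorem stmt4 (t : ℕ) (ht : 1 ≤ t) (S : Finset ℕ) (hS : S = (Finset.range t).image (2 ^ ·)) :
    Nat.card {y : Fin t → ℕ // (∀ i, y i ∈ S) ∧ (2 ^ t - 1) ∣ ∑ i, y i} = t.factorial ∧
    ∀ y : Fin t → ℕ, (∀ i, y i ∈ S) → (2 ^ t - 1) ∣ ∑ i, y i →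
      (∑ i, y i = 2 ^ t - 1 ∧ ∀ s ∈ S, ∃ i, y i = s) := by
  subst hS
  have hmem (σ : Equiv.Perm (Fin t)) (i : Fin t) : 2 ^ (σ i : ℕ) ∈ (range t).image (2 ^ ·) :=
    mem_image_of_mem _ (mem_range.mpr (σ i).isLt)
  refine ⟨?_, fun y hy hdvd => ?_⟩
  · let f (σ : Equiv.Perm (Fin t)) :
        {y : Fin t → ℕ // (∀ i, y i ∈ (range t).image (2 ^ ·)) ∧ 2 ^ t - 1 ∣ ∑ i, y i} :=
      ⟨_, hmem σ, by rw [sum_two_pow_perm]⟩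
    have hf : f.Bijective := by
      refine ⟨fun σ τ h => two_pow_perm_injective (congrArg Subtype.val h), ?_⟩
      rintro ⟨y, hy, hdvd⟩
      obtain ⟨σ, rfl⟩ := exists_perm_of_two_pow_sub_one_dvd_sum ht hy hdvd
      exact ⟨σ, rfl⟩
    rw [← Nat.card_eq_of_bijective f hf, Nat.card_perm, Nat.card_fin]
  · obtain ⟨σ, rfl⟩ := exists_perm_of_two_pow_sub_one_dvd_sum ht hy hdvd
    refine ⟨sum_two_pow_perm σ, fun s hs => ?_⟩
    obtain ⟨j, hj, rfl⟩ := mem_image.mp hs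
    exact ⟨σ.symm ⟨j, mem_range.mp hj⟩, by simp⟩
end

section
/- Let $Q$ be a uniformly random $\tau$-th root of unity with $\tau = 2^t - 1$, $t \geq 1$. Let $t' < t$, let $Y_1, \ldots, Y_{t'}$ be random variables taking values in $S = \{2^0, \ldots, 2^{t-1}\}$, independent of $Q$, and let $f : \{1,\ldots,t\} \to \{1,\ldots,t'\}$ be any function. Then $\mathbf{E}[Q^{\sum_{c=1}^t Y_{f(c)}}] = 0$. -/
/-!
Write `Y i = 2 ^ a i`. Since `t' < t`, `f` is not injective, so the exponent
`K = ∑ c, 2 ^ a (f c)` is a sum of `t` powers of two two of which coincide, hence a sum of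
`t - 1` powers of two. A positive multiple of `2 ^ t - 1` is never a sum of fewer than `t` powers
of two: reducing the exponents mod `t` keeps the residue mod `2 ^ t - 1`, merging
`2 ^ e + 2 ^ e = 2 ^ (e + 1)` lowers the count, and a sum of distinct `2 ^ e` with `e < t` that is
divisible by `2 ^ t - 1` must use every such `e`. So `τ ∤ K`, and the sum of `ζ ^ (j * K)` over
`j < τ` vanishes for a primitive `τ`-th root of unity `ζ`.
-/

open Finset

theorem Nat.two_pow_mod_modEq (t e : ℕ) : 2 ^ (e % t) ≡ 2 ^ e [MOD 2 ^ t - 1] := by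
  have h : 2 ^ t ≡ 1 [MOD 2 ^ t - 1] := Nat.modEq_sub Nat.one_le_two_pow
  calc 2 ^ (e % t) = 1 ^ (e / t) * 2 ^ (e % t) := by rw [one_pow, one_mul]
    _ ≡ (2 ^ t) ^ (e / t) * 2 ^ (e % t) [MOD 2 ^ t - 1] := (h.symm.pow _).mul_right _
    _ = 2 ^ e := by rw [← pow_mul, ← pow_add, Nat.div_add_mod]

theorem Multiset.sum_map_two_pow_mod_modEq (t : ℕ) (s : Multiset ℕ) :
    (s.map fun e => 2 ^ (e % t)).sum ≡ (s.map (2 ^ ·)).sum [MOD 2 ^ t - 1] := by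
  induction s using Multiset.induction_on with
  | empty => rfl
  | cons e s ih =>
    simp only [Multiset.map_cons, Multiset.sum_cons]
    exact (Nat.two_pow_mod_modEq t e).add ih

theorem Finset.eq_range_of_two_pow_sub_one_dvd_sum_s7 {t : ℕ} {S : Finset ℕ} (hS : S ⊆ range t)
    (hne : S.Nonempty) (h : 2 ^ t - 1 ∣ ∑ e ∈ S, 2 ^ e) : S = range t := by
  by_contra hS'
  obtain ⟨i, hi, hiS⟩ := exists_of_ssubset (hS.ssubset_of_ne hS')
  have hlt : ∑ e ∈ S, 2 ^ e < 2 ^ t - 1 := by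
    calc ∑ e ∈ S, 2 ^ e < ∑ e ∈ range t, 2 ^ e :=
          sum_lt_sum_of_subset hS hi hiS (by positivity) fun _ _ _ => Nat.zero_le _
      _ = 2 ^ t - 1 := by rw [Nat.geomSum_eq le_rfl]; simp
  exact hlt.not_ge (Nat.le_of_dvd (sum_pos (fun _ _ => by positivity) hne) h)

theorem Multiset.exists_sum_map_two_pow_eq_of_not_nodup {s : Multiset ℕ} (hs : ¬ s.Nodup) :
    ∃ s' : Multiset ℕ, card s' + 1 = card s ∧ s' ≠ 0 ∧
      (s'.map (2 ^ ·)).sum = (s.map (2 ^ ·)).sum := by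
  classical
  obtain ⟨a, ha⟩ : ∃ a, 1 < s.count a := by
    simpa [Multiset.nodup_iff_count_le_one] using hs
  obtain ⟨r, rfl⟩ := Multiset.le_iff_exists_add.1 (Multiset.le_count_iff_replicate_le.1 ha)
  refine ⟨(a + 1) ::ₘ r, ?_, Multiset.cons_ne_zero, ?_⟩
  · simp only [Multiset.card_cons, Multiset.card_add, Multiset.card_replicate]
    omega
  · simp only [Multiset.map_cons, Multiset.sum_cons, Multiset.map_add, Multiset.sum_add,
      Multiset.map_replicate, Multiset.sum_replicate, smul_eq_mul]
    ring

theorem Multiset.le_card_of_two_pow_sub_one_dvd {t : ℕ} {s : Multiset ℕ} (hs : s ≠ 0)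
    (h : 2 ^ t - 1 ∣ (s.map (2 ^ ·)).sum) : t ≤ card s := by
  induction hn : card s using Nat.strong_induction_on generalizing s with
  | _ n ih =>
  rcases Nat.eq_zero_or_pos t with rfl | ht
  · exact Nat.zero_le n
  set r := s.map (· % t) with hr
  have hrcard : card r = n := by rw [hr, Multiset.card_map, hn]
  have hrdvd : 2 ^ t - 1 ∣ (r.map (2 ^ ·)).sum := by
    rw [hr, Multiset.map_map]
    exact ((Multiset.sum_map_two_pow_mod_modEq t s).dvd_iff dvd_rfl).2 h
  by_cases hnd : r.Nodup
  · have hS : (⟨r, hnd⟩ : Finset ℕ) = Finset.range t := by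
      refine eq_range_of_two_pow_sub_one_dvd_sum_s7 (fun e he => ?_)
        (Finset.nonempty_mk.2 (mt Multiset.map_eq_zero.1 hs)) hrdvd
      obtain ⟨e', -, rfl⟩ := Multiset.mem_map.1 he
      exact Finset.mem_range.2 (Nat.mod_lt _ ht)
    rw [← hrcard, ← Finset.card_mk (nodup := hnd), hS, Finset.card_range]
  · obtain ⟨r', hcard, hr0, hsum⟩ := Multiset.exists_sum_map_two_pow_eq_of_not_nodup hnd
    have := ih (card r') (by omega) hr0 (hsum ▸ hrdvd) rfl
    omega

theorem Multiset.not_two_pow_sub_one_dvd_sum_of_not_nodup {t : ℕ} {s : Multiset ℕ}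
    (hs : ¬ s.Nodup) (hcard : card s ≤ t) : ¬ 2 ^ t - 1 ∣ (s.map (2 ^ ·)).sum := by
  intro h
  obtain ⟨s', hs', hs'0, hsum⟩ := Multiset.exists_sum_map_two_pow_eq_of_not_nodup hs
  have := Multiset.le_card_of_two_pow_sub_one_dvd hs'0 (hsum ▸ h)
  omega

theorem not_two_pow_sub_one_dvd_sum_two_pow {ι : Type*} [Fintype ι] {t : ℕ} {g : ι → ℕ}
    (hg : ¬ Function.Injective g) (hcard : Fintype.card ι ≤ t) :
    ¬ 2 ^ t - 1 ∣ ∑ i, 2 ^ g i := by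
  have hnd : ¬ (univ.val.map g).Nodup := by
    rwa [nodup_map_iff_injOn, coe_univ, Set.injOn_univ]
  have := Multiset.not_two_pow_sub_one_dvd_sum_of_not_nodup (t := t) hnd
    (by rwa [Multiset.card_map])
  rwa [Multiset.map_map] at this

theorem IsPrimitiveRoot.sum_range_pow_pow_eq_zero {R : Type*} [CommRing R] [IsDomain R] {ζ : R}
    {n k : ℕ} (hζ : IsPrimitiveRoot ζ n) (hk : ¬ n ∣ k) : ∑ j ∈ range n, (ζ ^ j) ^ k = 0 := by
  have hne : ζ ^ k - 1 ≠ 0 := sub_ne_zero.2 (mt (hζ.pow_eq_one_iff_dvd k).1 hk)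
  have hgeom : (∑ j ∈ range n, (ζ ^ k) ^ j) * (ζ ^ k - 1) = 0 := by
    rw [geom_sum_mul, pow_right_comm, hζ.pow_eq_one, one_pow, sub_self]
  simpa only [pow_right_comm ζ k] using (mul_eq_zero.1 hgeom).resolve_right hne

theorem stmt7_general (t t' : ℕ) (h : t' < t) (τ : ℕ) (hτ : τ = 2 ^ t - 1)
    (p : (Fin t' → ℕ) → ℝ)
    (f : Fin t → Fin t') :
    (1 / (τ : ℂ)) *
      ∑ y ∈ Fintype.piFinset (fun _ : Fin t' => (Finset.range t).image (2 ^ ·)),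
        ∑ j ∈ Finset.range τ,
          (p y : ℂ) * Complex.exp (2 * Real.pi * Complex.I * j / τ) ^ (∑ c, y (f c))
      = 0 := by
  have hτ0 : τ ≠ 0 := by have := Nat.one_lt_two_pow (n := t) (by omega); omega
  have hf : ¬ Function.Injective f := fun hf =>
    (Fintype.card_le_of_injective f hf).not_gt (by simpa using h)
  refine mul_eq_zero_of_right _ (sum_eq_zero fun y hy => ?_)
  choose a _ ha using fun i => mem_image.1 (Fintype.mem_piFinset.1 hy i)
  obtain rfl : (fun i => 2 ^ a i) = y := funext ha
  have hK : ¬ τ ∣ ∑ c, 2 ^ a (f c) :=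
    hτ ▸ not_two_pow_sub_one_dvd_sum_two_pow (fun hi => hf hi.of_comp) (by simp)
  have hexp (j : ℕ) : Complex.exp (2 * Real.pi * Complex.I * j / τ) =
      Complex.exp (2 * Real.pi * Complex.I / τ) ^ j := by
    rw [← Complex.exp_nat_mul]; ring_nf
  simp_rw [← mul_sum, hexp, (Complex.isPrimitiveRoot_exp τ hτ0).sum_range_pow_pow_eq_zero hK,
    mul_zero]

/-- For `Q` a uniformly random `τ`-th root of unity with `τ = 2^t - 1`, `t' < t`,
random variables `Y_1,…,Y_{t'}` taking values in `S = {2^0,…,2^{t-1}}` (with an arbitrary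
distribution `p`), independent of `Q`, and any `f : {1,…,t} → {1,…,t'}`, we have
`E[Q^{∑_c Y_{f(c)}}] = 0`. The expectation is written out over the joint distribution. -/
theorem stmt7 (t t' : ℕ) (h : t' < t) (τ : ℕ) (hτ : τ = 2 ^ t - 1)
    (p : (Fin t' → ℕ) → ℝ) (hp0 : ∀ y, 0 ≤ p y)
    (hp1 : ∑ y ∈ Fintype.piFinset (fun _ : Fin t' => (Finset.range t).image (2 ^ ·)), p y = 1)
    (f : Fin t → Fin t') :
    (1 / (τ : ℂ)) *
      ∑ y ∈ Fintype.piFinset (fun _ : Fin t' => (Finset.range t).image (2 ^ ·)),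
        ∑ j ∈ Finset.range τ,
          (p y : ℂ) * Complex.exp (2 * Real.pi * Complex.I * j / τ) ^ (∑ c, y (f c))
      = 0 :=
  stmt7_general t t' h τ hτ p f
end
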